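/- arXiv:1107.2748 — 2 statements merged into one kernel-verified Lean document; each statement's English description precedes it below -/
import Mathlib

section
/- Let d ≥ 1, let Q be an invertible real d×d matrix, let M satisfy the commutation condition Mᵀ(QᵀQ)⁻¹ = (QᵀQ)⁻¹M, let v, w be symmetric real d×d matrices, let R be symmetric with R·R = v̄, suppose R·cosh(Rt) + w̄·sinh(Rt) is invertible for every t ∈ [0,T], and suppose moreover that det(exp(−Mt)·(cosh(Rt) + sinh(Rt)·k(t))) > 0 for every t ∈ [0,T]. Let α be a real number, let ψ(t) := (QᵀQ)⁻¹M/2 − Q⁻¹·R·k(t)·(Qᵀ)⁻¹/2, and define φ(t) := −(α/2)·log(det(exp(−Mt)·(cosh(Rt) + sinh(Rt)·k(t)))). Then φ(0) = 0 and, for every t ∈ [0,T], φ is differentiable at t with φ′(t) = α·Tr[QᵀQ·ψ(t)]. -/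
/-!
With `W = w̄`, `A(t) = R cosh(tR) + W sinh(tR)` and `B(t) = R sinh(tR) + W cosh(tR)` one has
`A' = B R` and `B' = A R` (as `R` commutes with `cosh(tR)` and `sinh(tR)`), so `k = -A⁻¹ B`
solves the Riccati equation `k' = k R k - R`. Hence `G(t) = cosh(tR) + sinh(tR) k(t)` satisfies
`G' = G R k`, and Jacobi's formula `(log det F)' = tr (F⁻¹ F')` for `F(t) = exp(-tM) G(t)` gives
`(log det F)' = tr (R k) - tr M`. Finally `tr (QᵀQ ψ) = (tr M - tr (R k)) / 2`, the trace being
invariant under conjugation.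
-/

open Matrix NormedSpace

attribute [local instance] Matrix.linftyOpNormedRing Matrix.linftyOpNormedAlgebra

/-- `cosh` of a square matrix. -/
noncomputable def mcosh {d : ℕ} (X : Matrix (Fin d) (Fin d) ℝ) : Matrix (Fin d) (Fin d) ℝ :=
  (2:ℝ)⁻¹ • (exp X + exp (-X))

/-- `sinh` of a square matrix. -/
noncomputable def msinh {d : ℕ} (X : Matrix (Fin d) (Fin d) ℝ) : Matrix (Fin d) (Fin d) ℝ :=
  (2:ℝ)⁻¹ • (exp X - exp (-X))

namespace Matrix

variable {n α : Type*} [Fintype n] [DecidableEq n] [CommRing α]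

theorem trace_adjugate_mul_eq_sum_det_updateCol (A B : Matrix n n α) :
    (A.adjugate * B).trace = ∑ i, (A.updateCol i fun r => B r i).det := by
  refine Finset.sum_congr rfl fun i _ => ?_
  rw [← cramer_apply, cramer_eq_adjugate_mulVec]
  rfl

theorem det_updateCol_eq_sum_perm (A : Matrix n n α) (b : n → α) (i : n) :
    (A.updateCol i b).det =
      ∑ σ : Equiv.Perm n,
        (Equiv.Perm.sign σ : α) * ((∏ j ∈ Finset.univ.erase i, A (σ j) j) * b (σ i)) := by
  rw [det_apply']
  refine Finset.sum_congr rfl fun σ _ => ?_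
  rw [← Finset.prod_erase_mul _ _ (Finset.mem_univ i), updateCol_self]
  congr 2
  exact Finset.prod_congr rfl fun j hj => updateCol_ne (Finset.ne_of_mem_erase hj)

end Matrix

section MatrixCalculus

variable {n : Type*} [Fintype n] [DecidableEq n]
  {X : ℝ → Matrix n n ℝ} {X' : Matrix n n ℝ} {t : ℝ}

theorem HasDerivAt.matrix_apply (h : HasDerivAt X X' t) (i j : n) :
    HasDerivAt (fun s => X s i j) (X' i j) t :=
  (entryLinearMap ℝ ℝ i j : Matrix n n ℝ →ₗ[ℝ] ℝ).toContinuousLinearMap.hasFDerivAt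
    |>.comp_hasDerivAt t h

theorem HasDerivAt.matrix_det (h : HasDerivAt X X' t) :
    HasDerivAt (fun s => (X s).det) ((X t).adjugate * X').trace t := by
  have hprod (σ : Equiv.Perm n) : HasDerivAt (fun s => ∏ i, X s (σ i) i)
      (∑ i, (∏ j ∈ Finset.univ.erase i, X t (σ j) j) * X' (σ i) i) t := by
    simpa only [smul_eq_mul] using HasDerivAt.fun_finsetProd (u := Finset.univ)
      (f := fun i s => X s (σ i) i) fun i _ => h.matrix_apply (σ i) i
  have hdet := HasDerivAt.fun_sum fun σ (_ : σ ∈ Finset.univ) =>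
    (hprod σ).const_mul (Equiv.Perm.sign σ : ℝ)
  refine (hdet.congr_deriv ?_).congr_of_eventuallyEq (.of_forall fun s => det_apply' (X s))
  simp only [trace_adjugate_mul_eq_sum_det_updateCol, det_updateCol_eq_sum_perm, Finset.mul_sum]
  exact Finset.sum_comm

theorem HasDerivAt.log_det (h : HasDerivAt X X' t) (hX : (X t).det ≠ 0) :
    HasDerivAt (fun s => Real.log (X s).det) ((X t)⁻¹ * X').trace t := by
  refine ((Real.hasDerivAt_log hX).comp t h.matrix_det).congr_deriv ?_
  rw [inv_def, smul_mul, trace_smul, Ring.inverse_eq_inv', smul_eq_mul, inv_mul_eq_div]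

theorem HasDerivAt.matrix_inv (h : HasDerivAt X X' t) (hX : IsUnit (X t)) :
    HasDerivAt (fun s => (X s)⁻¹) (-((X t)⁻¹ * X' * (X t)⁻¹)) t := by
  have hinv := hasFDerivAt_ringInverse (𝕜 := ℝ) hX.unit
  rw [hX.unit_spec] at hinv
  replace hinv := hinv.comp_hasDerivAt t h
  simp only [Function.comp_def, ← nonsing_inv_eq_ringInverse, coe_units_inv, hX.unit_spec]
    at hinv
  exact hinv

end MatrixCalculus

section HyperbolicFunctions

variable {d : ℕ}

theorem hasDerivAt_exp_neg_smul (M : Matrix (Fin d) (Fin d) ℝ) (t : ℝ) :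
    HasDerivAt (fun u : ℝ => exp (-(u • M))) (-M * exp (-(t • M))) t := by
  have h := hasDerivAt_exp_smul_const' (𝕂 := ℝ) (-M) t
  simp only [smul_neg] at h
  exact h

@[simp]
theorem mcosh_zero : mcosh (0 : Matrix (Fin d) (Fin d) ℝ) = 1 := by
  rw [mcosh, neg_zero, exp_zero, ← two_smul ℝ 1, smul_smul, inv_mul_cancel₀ two_ne_zero,
    one_smul]

@[simp]
theorem msinh_zero : msinh (0 : Matrix (Fin d) (Fin d) ℝ) = 0 := by
  rw [msinh, neg_zero, sub_self, smul_zero]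

theorem hasDerivAt_mcosh_smul (R : Matrix (Fin d) (Fin d) ℝ) (t : ℝ) :
    HasDerivAt (fun u : ℝ => mcosh (u • R)) (R * msinh (t • R)) t := by
  have h := ((hasDerivAt_exp_smul_const' (𝕂 := ℝ) R t).fun_add
    (hasDerivAt_exp_smul_const' (𝕂 := ℝ) (-R) t)).fun_const_smul (2 : ℝ)⁻¹
  simp only [smul_neg] at h
  refine h.congr_deriv ?_
  rw [msinh, mul_smul_comm, mul_sub, neg_mul, sub_eq_add_neg]
  rfl

theorem hasDerivAt_msinh_smul (R : Matrix (Fin d) (Fin d) ℝ) (t : ℝ) :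
    HasDerivAt (fun u : ℝ => msinh (u • R)) (R * mcosh (t • R)) t := by
  have h := ((hasDerivAt_exp_smul_const' (𝕂 := ℝ) R t).fun_sub
    (hasDerivAt_exp_smul_const' (𝕂 := ℝ) (-R) t)).fun_const_smul (2 : ℝ)⁻¹
  simp only [smul_neg] at h
  refine h.congr_deriv ?_
  rw [mcosh, mul_smul_comm, mul_add, neg_mul, sub_neg_eq_add]
  rfl

theorem Commute.mcosh_smul_right {X R : Matrix (Fin d) (Fin d) ℝ} (h : Commute X R) (t : ℝ) :
    Commute X (mcosh (t • R)) :=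
  ((h.smul_right t).exp_right.add_right (h.smul_right t).neg_right.exp_right).smul_right _

theorem Commute.msinh_smul_right {X R : Matrix (Fin d) (Fin d) ℝ} (h : Commute X R) (t : ℝ) :
    Commute X (msinh (t • R)) :=
  ((h.smul_right t).exp_right.sub_right (h.smul_right t).neg_right.exp_right).smul_right _

end HyperbolicFunctions

section Riccati

variable {d : ℕ}

noncomputable def riccatiSolution (R W : Matrix (Fin d) (Fin d) ℝ) (t : ℝ) :
    Matrix (Fin d) (Fin d) ℝ :=
  -((R * mcosh (t • R) + W * msinh (t • R))⁻¹ * (R * msinh (t • R) + W * mcosh (t • R)))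

variable {R W : Matrix (Fin d) (Fin d) ℝ} {t : ℝ}

theorem hasDerivAt_riccatiSolution (hA : IsUnit (R * mcosh (t • R) + W * msinh (t • R))) :
    HasDerivAt (riccatiSolution R W)
      (riccatiSolution R W t * R * riccatiSolution R W t - R) t := by
  have hc := hasDerivAt_mcosh_smul R t
  have hs := hasDerivAt_msinh_smul R t
  have hRc := ((Commute.refl R).mcosh_smul_right t).eq
  have hRs := ((Commute.refl R).msinh_smul_right t).eq
  have hA' : HasDerivAt (fun u => R * mcosh (u • R) + W * msinh (u • R))
      ((R * msinh (t • R) + W * mcosh (t • R)) * R) t := by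
    refine ((hc.const_mul R).fun_add (hs.const_mul W)).congr_deriv ?_
    rw [add_mul, mul_assoc, mul_assoc, ← hRs, ← hRc]
  have hB' : HasDerivAt (fun u => R * msinh (u • R) + W * mcosh (u • R))
      ((R * mcosh (t • R) + W * msinh (t • R)) * R) t := by
    refine ((hs.const_mul R).fun_add (hc.const_mul W)).congr_deriv ?_
    rw [add_mul, mul_assoc, mul_assoc, ← hRs, ← hRc]
  refine ((hA'.matrix_inv hA).fun_mul hB').fun_neg.congr_deriv ?_
  rw [nonsing_inv_mul_cancel_left _ _ ((isUnit_iff_isUnit_det _).mp hA), riccatiSolution]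
  noncomm_ring

theorem hasDerivAt_mcosh_add_msinh_mul_riccatiSolution
    (hA : IsUnit (R * mcosh (t • R) + W * msinh (t • R))) :
    HasDerivAt (fun u => mcosh (u • R) + msinh (u • R) * riccatiSolution R W u)
      ((mcosh (t • R) + msinh (t • R) * riccatiSolution R W t) *
        (R * riccatiSolution R W t)) t := by
  refine ((hasDerivAt_mcosh_smul R t).fun_add
    ((hasDerivAt_msinh_smul R t).fun_mul (hasDerivAt_riccatiSolution hA))).congr_deriv ?_
  rw [((Commute.refl R).msinh_smul_right t).eq, ((Commute.refl R).mcosh_smul_right t).eq]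
  noncomm_ring

theorem hasDerivAt_log_det_exp_neg_smul_mul (M : Matrix (Fin d) (Fin d) ℝ)
    (hA : IsUnit (R * mcosh (t • R) + W * msinh (t • R)))
    (hdet : (exp (-(t • M)) * (mcosh (t • R) + msinh (t • R) * riccatiSolution R W t)).det ≠ 0) :
    HasDerivAt (fun u => Real.log
        (exp (-(u • M)) * (mcosh (u • R) + msinh (u • R) * riccatiSolution R W u)).det)
      ((R * riccatiSolution R W t).trace - M.trace) t := by
  refine (((hasDerivAt_exp_neg_smul M t).fun_mul
    (hasDerivAt_mcosh_add_msinh_mul_riccatiSolution hA)).log_det hdet).congr_deriv ?_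
  set E := exp (-(t • M))
  set G := mcosh (t • R) + msinh (t • R) * riccatiSolution R W t
  set K := R * riccatiSolution R W t
  have hG : IsUnit G.det := isUnit_iff_ne_zero.mpr (right_ne_zero_of_mul (det_mul E G ▸ hdet))
  have hME : M * E = E * M := ((Commute.refl M).smul_right t).neg_right.exp_right.eq
  have hF' : -M * E * G + E * (G * K) = E * G * (G⁻¹ * -M * G + K) := calc
    _ = E * (G * G⁻¹) * -M * G + E * (G * K) := by
      rw [mul_nonsing_inv _ hG, mul_one, mul_neg, neg_mul, neg_mul, neg_mul, hME]
    _ = E * G * (G⁻¹ * -M * G + K) := by noncomm_ring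
  rw [hF', nonsing_inv_mul_cancel_left _ _ (isUnit_iff_ne_zero.mpr hdet), trace_add,
    trace_conj' (isUnit_iff_isUnit_det G |>.mpr hG), trace_neg]
  ring

end Riccati

theorem trace_transpose_mul_self_mul_half_sub {n : Type*} [Fintype n] [DecidableEq n]
    {Q : Matrix n n ℝ} (hQ : IsUnit Q) (M K : Matrix n n ℝ) :
    ((Qᵀ * Q) * ((2:ℝ)⁻¹ • ((Qᵀ * Q)⁻¹ * M) - (2:ℝ)⁻¹ • (Q⁻¹ * K * Qᵀ⁻¹))).trace =
      (M.trace - K.trace) / 2 := by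
  have hQt : IsUnit Qᵀ := (isUnit_transpose Q).mpr hQ
  have hgram : Qᵀ * Q * ((Qᵀ * Q)⁻¹ * M) = M :=
    mul_nonsing_inv_cancel_left _ _ ((isUnit_iff_isUnit_det _).mp (hQt.mul hQ))
  have hconj : Qᵀ * Q * (Q⁻¹ * K * Qᵀ⁻¹) = Qᵀ * K * Qᵀ⁻¹ := by
    rw [mul_assoc, mul_assoc, mul_assoc, ← mul_assoc Q,
      mul_nonsing_inv _ ((isUnit_iff_isUnit_det _).mp hQ), one_mul]
  rw [mul_sub, Matrix.mul_smul, Matrix.mul_smul, trace_sub, trace_smul, trace_smul, hgram, hconj,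
    trace_conj hQt, smul_eq_mul, smul_eq_mul]
  ring

theorem stmt_1_general (d : ℕ) (T : ℝ) (α : ℝ)
    (Q M R : Matrix (Fin d) (Fin d) ℝ)
    (hQ : IsUnit Q)
    (wbar : Matrix (Fin d) (Fin d) ℝ)
    (hinv : ∀ t ∈ Set.Icc (0:ℝ) T, IsUnit (R * mcosh (t • R) + wbar * msinh (t • R)))
    (k ψ : ℝ → Matrix (Fin d) (Fin d) ℝ)
    (hk : ∀ t, k t = -((R * mcosh (t • R) + wbar * msinh (t • R))⁻¹ *
      (R * msinh (t • R) + wbar * mcosh (t • R))))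
    (hψ : ∀ t, ψ t = (2:ℝ)⁻¹ • ((Qᵀ * Q)⁻¹ * M) - (2:ℝ)⁻¹ • (Q⁻¹ * R * k t * Qᵀ⁻¹))
    (hdet : ∀ t ∈ Set.Icc (0:ℝ) T,
      0 < (exp (-(t • M)) * (mcosh (t • R) + msinh (t • R) * k t)).det)
    (φ : ℝ → ℝ)
    (hφ : ∀ t, φ t = -(α / 2) *
      Real.log (exp (-(t • M)) * (mcosh (t • R) + msinh (t • R) * k t)).det) :
    φ 0 = 0 ∧ ∀ t ∈ Set.Icc (0:ℝ) T,
      HasDerivAt φ (α * ((Qᵀ * Q) * ψ t).trace) t := by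
  obtain rfl : k = riccatiSolution R wbar := funext hk
  obtain rfl : φ = _ := funext hφ
  refine ⟨by simp, fun t ht => ?_⟩
  rw [hψ, mul_assoc Q⁻¹ R, trace_transpose_mul_self_mul_half_sub hQ]
  refine ((hasDerivAt_log_det_exp_neg_smul_mul M (hinv t ht) (hdet t ht).ne').const_mul
    (-(α / 2))).congr_deriv ?_
  ring

theorem stmt_1 (d : ℕ) (hd : 1 ≤ d) (T : ℝ) (hT : 0 < T) (α : ℝ)
    (Q M v w R : Matrix (Fin d) (Fin d) ℝ)
    (hQ : IsUnit Q)
    (hM : Mᵀ * (Qᵀ * Q)⁻¹ = (Qᵀ * Q)⁻¹ * M)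
    (hv : v.IsSymm) (hw : w.IsSymm) (hR : R.IsSymm)
    (vbar wbar : Matrix (Fin d) (Fin d) ℝ)
    (hvbar : vbar = Q * ((2:ℝ) • v + Mᵀ * (Qᵀ * Q)⁻¹ * M) * Qᵀ)
    (hwbar : wbar = Q * ((2:ℝ) • w - (Qᵀ * Q)⁻¹ * M) * Qᵀ)
    (hRR : R * R = vbar)
    (hinv : ∀ t ∈ Set.Icc (0:ℝ) T, IsUnit (R * mcosh (t • R) + wbar * msinh (t • R)))
    (k ψ : ℝ → Matrix (Fin d) (Fin d) ℝ)
    (hk : ∀ t, k t = -((R * mcosh (t • R) + wbar * msinh (t • R))⁻¹ *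
      (R * msinh (t • R) + wbar * mcosh (t • R))))
    (hψ : ∀ t, ψ t = (2:ℝ)⁻¹ • ((Qᵀ * Q)⁻¹ * M) - (2:ℝ)⁻¹ • (Q⁻¹ * R * k t * Qᵀ⁻¹))
    (hdet : ∀ t ∈ Set.Icc (0:ℝ) T,
      0 < (exp (-(t • M)) * (mcosh (t • R) + msinh (t • R) * k t)).det)
    (φ : ℝ → ℝ)
    (hφ : ∀ t, φ t = -(α / 2) *
      Real.log (exp (-(t • M)) * (mcosh (t • R) + msinh (t • R) * k t)).det) :
    φ 0 = 0 ∧ ∀ t ∈ Set.Icc (0:ℝ) T,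
      HasDerivAt φ (α * ((Qᵀ * Q) * ψ t).trace) t :=
  stmt_1_general d T α Q M R hQ wbar hinv k ψ hk hψ hdet φ hφ
end

section
/- Let d ≥ 1, let u be a symmetric real d×d matrix, and suppose that I_d + 2su is invertible for every s ∈ [0,T]. Then the function ψ(s) := (I_d + 2su)⁻¹·u satisfies ψ(0) = u and, for every s ∈ [0,T], ψ is differentiable at s with ψ′(s) = −2·ψ(s)·ψ(s). -/
open Matrix

attribute [local instance] Matrix.linftyOpNormedRing Matrix.linftyOpNormedAlgebra

section RingInverse

variable {𝕜 R : Type*} [NontriviallyNormedField 𝕜] [NormedRing R] [HasSummableGeomSeries R]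
  [NormedAlgebra 𝕜 R]

theorem HasDerivAt.ringInverse {A : 𝕜 → R} {A' : R} {t : 𝕜} (hA : HasDerivAt A A' t)
    (ht : IsUnit (A t)) :
    HasDerivAt (fun s => Ring.inverse (A s))
      (-(Ring.inverse (A t) * A' * Ring.inverse (A t))) t := by
  obtain ⟨w, hw⟩ := ht
  rw [← hw, Ring.inverse_unit]
  exact (hw ▸ hasFDerivAt_ringInverse (𝕜 := 𝕜) w).comp_hasDerivAt t hA

theorem hasDerivAt_ringInverse_one_add_smul_mul (c : 𝕜) (a : R) {t : 𝕜}
    (ht : IsUnit (1 + (c * t) • a)) :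
    HasDerivAt (fun s => Ring.inverse (1 + (c * s) • a) * a)
      (-c • (Ring.inverse (1 + (c * t) • a) * a * (Ring.inverse (1 + (c * t) • a) * a))) t := by
  have hline : HasDerivAt (fun s : 𝕜 => 1 + (c * s) • a) (c • a) t := by
    simpa [mul_smul] using ((hasDerivAt_id t).smul_const a).const_smul c |>.const_add 1
  convert (hline.ringInverse ht).mul_const a using 1
  simp only [neg_smul, neg_mul, smul_mul_assoc, mul_smul_comm, mul_assoc]

end RingInverse

theorem stmt_12_general (d : ℕ) (T : ℝ)
    (u : Matrix (Fin d) (Fin d) ℝ)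
    (hinv : ∀ s ∈ Set.Icc (0:ℝ) T, IsUnit ((1 : Matrix (Fin d) (Fin d) ℝ) + (2 * s) • u))
    (ψ : ℝ → Matrix (Fin d) (Fin d) ℝ)
    (hψ : ∀ s, ψ s = ((1 : Matrix (Fin d) (Fin d) ℝ) + (2 * s) • u)⁻¹ * u) :
    ψ 0 = u ∧ ∀ s ∈ Set.Icc (0:ℝ) T,
      HasDerivAt ψ (-(2:ℝ) • (ψ s * ψ s)) s := by
  have hψ_ring : ψ = fun s => Ring.inverse ((1 : Matrix (Fin d) (Fin d) ℝ) + (2 * s) • u) * u := by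
    funext s
    rw [hψ, nonsing_inv_eq_ringInverse]
  refine ⟨by simp [hψ], fun s hs => ?_⟩
  rw [hψ_ring]
  exact hasDerivAt_ringInverse_one_add_smul_mul 2 u (hinv s hs)

theorem stmt_12 (d : ℕ) (hd : 1 ≤ d) (T : ℝ) (hT : 0 < T)
    (u : Matrix (Fin d) (Fin d) ℝ) (hu : u.IsSymm)
    (hinv : ∀ s ∈ Set.Icc (0:ℝ) T, IsUnit ((1 : Matrix (Fin d) (Fin d) ℝ) + (2 * s) • u))
    (ψ : ℝ → Matrix (Fin d) (Fin d) ℝ)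
    (hψ : ∀ s, ψ s = ((1 : Matrix (Fin d) (Fin d) ℝ) + (2 * s) • u)⁻¹ * u) :
    ψ 0 = u ∧ ∀ s ∈ Set.Icc (0:ℝ) T,
      HasDerivAt ψ (-(2:ℝ) • (ψ s * ψ s)) s :=
  stmt_12_general d T u hinv ψ hψ
end
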